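/- arXiv:2305.12197 — 3 statements merged into one kernel-verified Lean document; each statement's English description precedes it below -/
import Mathlib

section
/- Let P be a convex subset of a real inner product space E, let x̃ ∈ E, let ε > 0, let y* ∈ P minimize f(y) = ½‖y − x̃‖² over P with f(y*) > ε (equivalently ‖y* − x̃‖ > √(2ε)), and let y ∈ P be arbitrary. Then ⟨y − x̃, y⟩ − ε > ⟨y − x̃, x̃⟩, i.e., the inequality (approxCut) strictly separates x̃ from P whenever x̃ is sufficiently far from P. -/
open scoped RealInnerProductSpace

/-- Violation of (approxCut) by `xt` when `xt` is `√ε`-far from `P`: if `y⋆ ∈ P` minimizes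
`f(y) = ½‖y - xt‖²` over the convex set `P` with `f(y⋆) > ε`, then for any `y ∈ P` one has
`⟪y - xt, y⟫ - ε > ⟪y - xt, xt⟫`. -/
theorem approx_cut_separates {E : Type*} [NormedAddCommGroup E] [InnerProductSpace ℝ E]
    (P : Set E) (hP : Convex ℝ P) (xt : E) (ε : ℝ) (hε : 0 < ε) (ystar : E) (hystar : ystar ∈ P)
    (hmin : ∀ z ∈ P, (1 / 2 : ℝ) * ‖ystar - xt‖ ^ 2 ≤ (1 / 2 : ℝ) * ‖z - xt‖ ^ 2)
    (hfar : (1 / 2 : ℝ) * ‖ystar - xt‖ ^ 2 > ε) (y : E) (hy : y ∈ P) :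
    ⟪y - xt, xt⟫ < ⟪y - xt, y⟫ - ε := by
  have h1 : ⟪y - xt, y⟫ - ⟪y - xt, xt⟫ = ‖y - xt‖ ^ 2 := by
    rw [← inner_sub_right, real_inner_self_eq_norm_sq]
  have h2 := (hfar.trans_le (hmin y hy))
  nlinarith
end

section
/- Let P be a nonempty compact convex subset of ℝⁿ (with the standard inner product and Euclidean norm) and let x̃ ∈ ℝⁿ. Then x̃ ∉ P if and only if there exists y ∈ P such that ‖y − v‖ < ‖x̃ − v‖ for all v ∈ P. -/
open scoped RealInnerProductSpace

/-- Characterization, (Non-Membership) ↔ (Distance): for a nonempty compact convex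
`P ⊆ ℝⁿ` and `xt ∈ ℝⁿ`, one has `xt ∉ P` iff there exists `y ∈ P` with
`‖y - v‖ < ‖xt - v‖` for all `v ∈ P`. -/
theorem nonmembership_iff_distance {n : ℕ} (P : Set (EuclideanSpace ℝ (Fin n)))
    (hPne : P.Nonempty) (hPc : IsCompact P) (hPconv : Convex ℝ P)
    (xt : EuclideanSpace ℝ (Fin n)) :
    xt ∉ P ↔ ∃ y ∈ P, ∀ v ∈ P, ‖y - v‖ < ‖xt - v‖ := by
  constructor
  · intro hx
    obtain ⟨y, hyP, hmin⟩ :=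
      exists_norm_eq_iInf_of_complete_convex hPne hPc.isComplete hPconv xt
    have hinner := (norm_eq_iInf_iff_real_inner_le_zero hPconv hyP).mp hmin
    refine ⟨y, hyP, fun v hv => ?_⟩
    have hne : xt - y ≠ 0 := sub_ne_zero.mpr (fun h => hx (h ▸ hyP))
    have hpos : 0 < ‖xt - y‖ := norm_pos_iff.mpr hne
    have hiv : ⟪xt - y, v - y⟫ ≤ 0 := hinner v hv
    have hdecomp : ‖xt - v‖ ^ 2 = ‖xt - y‖ ^ 2 + 2 * ⟪xt - y, y - v⟫ + ‖y - v‖ ^ 2 := by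
      have : xt - v = (xt - y) + (y - v) := by abel
      rw [this, norm_add_sq_real]
    have hiv' : 0 ≤ ⟪xt - y, y - v⟫ := by
      have : ⟪xt - y, y - v⟫ = -⟪xt - y, v - y⟫ := by
        rw [← inner_neg_right]; congr 1; abel
      linarith [hiv, this.ge, this.le]
    nlinarith [norm_nonneg (y - v), norm_nonneg (xt - v), hpos, hdecomp]
  · rintro ⟨y, hyP, hlt⟩ hxP
    have := hlt xt hxP
    simp only [sub_self, norm_zero] at this
    exact absurd this (norm_nonneg _).not_gt
end

section
/- Let P be a nonempty compact convex subset of ℝⁿ (with the standard inner product and Euclidean norm) and let x̃ ∈ ℝⁿ. Then x̃ ∉ P if and only if there exists y ∈ P such that ⟨y − x̃, y − v⟩ < ½‖x̃ − y‖² for all v ∈ P. -/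
open scoped RealInnerProductSpace

/-- Characterization, (Non-Membership) ↔ (FW Gap): for a nonempty compact convex
`P ⊆ ℝⁿ` and `xt ∈ ℝⁿ`, one has `xt ∉ P` iff there exists `y ∈ P` with
`⟪y - xt, y - v⟫ < ½‖xt - y‖²` for all `v ∈ P`. -/
theorem nonmembership_iff_fw_gap {n : ℕ} (P : Set (EuclideanSpace ℝ (Fin n)))
    (hPne : P.Nonempty) (hPc : IsCompact P) (hPconv : Convex ℝ P)
    (xt : EuclideanSpace ℝ (Fin n)) :
    xt ∉ P ↔ ∃ y ∈ P, ∀ v ∈ P, ⟪y - xt, y - v⟫ < (1 / 2 : ℝ) * ‖xt - y‖ ^ 2 := by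
  constructor
  · intro hx
    obtain ⟨y, hyP, hy⟩ := exists_norm_eq_iInf_of_complete_convex hPne
      (hPc.isClosed.isComplete) hPconv xt
    refine ⟨y, hyP, fun v hv => ?_⟩
    have hle : ⟪xt - y, v - y⟫ ≤ 0 :=
      (norm_eq_iInf_iff_real_inner_le_zero hPconv hyP).mp hy v hv
    have heq : ⟪y - xt, y - v⟫ = ⟪xt - y, v - y⟫ := by
      rw [← inner_neg_neg]; simp
    have hne : xt - y ≠ 0 := sub_ne_zero.mpr (fun h => hx (h ▸ hyP))
    have hpos : (0 : ℝ) < ‖xt - y‖ ^ 2 := by have := norm_pos_iff.mpr hne; positivity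
    calc ⟪y - xt, y - v⟫ ≤ 0 := heq ▸ hle
      _ < (1 / 2 : ℝ) * ‖xt - y‖ ^ 2 := by linarith
  · rintro ⟨y, hyP, hy⟩ hx
    have h := hy xt hx
    rw [real_inner_self_eq_norm_sq] at h
    have : ‖y - xt‖ = ‖xt - y‖ := norm_sub_rev _ _
    rw [this] at h
    nlinarith [sq_nonneg ‖xt - y‖]
end
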